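/- Let q > 1 be real, λ = q − q^{−1}, γ ∈ ℝ, and m ∈ ℕ. Then the function g(x) = h̃_m(q^{−γ−1/2} λ x) satisfies, for every real x ≠ 0, the reduced eigenvalue equation 0 = g(x)·(q + q^{−1} − ε q^{−2γ} λ² x²) − q^{−1} g(q² x) − q g(q^{−2} x)·(1 + q^{−2γ−1} λ² x²) with ε = −q^{−2m}. (Consequently ψ₀·g is an eigenfunction of the q-oscillator Hamiltonian with eigenvalue (1 − q^{−2m})/(1 − q^{−2}), the Fock part of the spectrum.) -/

import Mathlib

open scoped BigOperators
open Finset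

/-- The q-shifted factorial `(a;p)_n = ∏_{i=0}^{n-1} (1 - a p^i)`. -/
noncomputable def qPoch (a p : ℂ) (n : ℕ) : ℂ :=
  ∏ i ∈ Finset.range n, (1 - a * p ^ i)

/-- The basic hypergeometric series
`₂φ₁(a,b;0;p,z) = ∑_{j=0}^∞ ((a;p)_j (b;p)_j / (p;p)_j) z^j`. -/
noncomputable def phi21 (a b p z : ℂ) : ℂ :=
  ∑' j : ℕ, qPoch a p j * qPoch b p j / qPoch p p j * z ^ j

/-- The q-Hermite II type polynomial
`h̃_m(x) = x^m ₂φ₁(q^{2m-2}, q^{2m}; 0; q⁻⁴, -q⁻⁴/x²)`. -/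
noncomputable def qHermiteII (q : ℝ) (m : ℕ) (x : ℂ) : ℂ :=
  x ^ m * phi21 ((q : ℂ) ^ (2 * (m : ℤ) - 2)) ((q : ℂ) ^ (2 * (m : ℤ)))
    ((q : ℂ) ^ (-4 : ℤ)) (-(q : ℂ) ^ (-4 : ℤ) / x ^ 2)

lemma scalar_key (Q U V R L X : ℂ) (hQ : Q ≠ 0) (hU : U ≠ 0) (hV : V ≠ 0) (hR : R ≠ 0)
    (hL : L ≠ 0) (hX : X ≠ 0) (hden : (1:ℂ) - (Q^4)⁻¹ * V⁻¹ ≠ 0) :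
    (1 - U*(Q^2)⁻¹*V⁻¹) * (1 - U*V⁻¹) * ((-(Q^4)⁻¹/(R*L^2*X^2)) * X^2 *
        (-(L^2)*(R*Q)*(-(U⁻¹) + U⁻¹*(V*Q^4)))) / (1 - (Q^4)⁻¹*V⁻¹)
    = X^2*(-(L^2)*(R*Q)*(-(U⁻¹) + U⁻¹*V))
      - ((Q + Q⁻¹ - (-(U⁻¹))*(R*Q)*L^2*X^2) - Q⁻¹*(U*V⁻¹) - Q*(U⁻¹*V)*(1+R*L^2*X^2)) := by
  rw [div_eq_iff hden]
  field_simp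
  ring

lemma qPoch_succ (a p : ℂ) (n : ℕ) :
    qPoch a p (n + 1) = qPoch a p n * (1 - a * p ^ n) :=
  Finset.prod_range_succ _ _

set_option maxHeartbeats 1600000 in
/-- The function `g(x) = h̃_m(q^{-γ-1/2} λ x)` satisfies the reduced eigenvalue
equation with `ε = -q^{-2m}`:
`0 = g(x)(q + q⁻¹ - ε q^{-2γ} λ² x²) - q⁻¹ g(q²x) - q g(q⁻²x)(1 + q^{-2γ-1} λ² x²)`
for every real `x ≠ 0`, where `λ = q - q⁻¹`. Hence `ψ₀ g` is an eigenfunction of the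
q-oscillator Hamiltonian with eigenvalue `(1 - q^{-2m})/(1 - q⁻²)`. -/
theorem qHermite_fock_solution (q γ : ℝ) (hq : 1 < q) (m : ℕ)
    (g : ℝ → ℂ)
    (hg : ∀ x : ℝ, g x = qHermiteII q m
      (((q ^ (-γ - 1 / 2) * (q - q⁻¹) : ℝ) : ℂ) * (x : ℂ)))
    (ε : ℂ) (hε : ε = -(q : ℂ) ^ (-(2 * (m : ℤ)))) :
    ∀ x : ℝ, x ≠ 0 →
      0 = g x * ((q : ℂ) + (q : ℂ)⁻¹ -
            ε * ((q ^ (-2 * γ) : ℝ) : ℂ) * ((q - q⁻¹ : ℝ) : ℂ) ^ 2 * (x : ℂ) ^ 2) -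
        (q : ℂ)⁻¹ * g (q ^ 2 * x) -
        (q : ℂ) * g (q⁻¹ ^ 2 * x) *
          (1 + ((q ^ (-2 * γ - 1) : ℝ) : ℂ) * ((q - q⁻¹ : ℝ) : ℂ) ^ 2 * (x : ℂ) ^ 2) := by
  intro x hx
  have hq0 : (0:ℝ) < q := lt_trans one_pos hq
  have hQ0 : (q:ℂ) ≠ 0 := by exact_mod_cast ne_of_gt hq0
  set c : ℝ := q ^ (-γ - 1 / 2) * (q - q⁻¹) with hc_def
  have hlam_pos : (0:ℝ) < q - q⁻¹ := by
    have h1 : q⁻¹ < 1 := inv_lt_one_of_one_lt₀ hq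
    linarith
  have hc_pos : 0 < c := mul_pos (Real.rpow_pos_of_pos hq0 _) hlam_pos
  have hcC : ((c:ℝ):ℂ) ≠ 0 := by exact_mod_cast ne_of_gt hc_pos
  have hX : (x:ℂ) ≠ 0 := by exact_mod_cast hx
  have hL : ((q - q⁻¹ : ℝ):ℂ) ≠ 0 := by exact_mod_cast ne_of_gt hlam_pos
  have hr21 : ((q ^ (-2*γ - 1) : ℝ):ℂ) ≠ 0 := by
    exact_mod_cast ne_of_gt (Real.rpow_pos_of_pos hq0 _)
  set Zc : ℂ := ((c:ℝ):ℂ) * (x:ℂ) with hZc_def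
  have hZc : Zc ≠ 0 := mul_ne_zero hcC hX
  -- power rewrites
  have hp4 : (q:ℂ) ^ (-4:ℤ) = ((q:ℂ)^4)⁻¹ := by
    rw [show (-4:ℤ) = -((4:ℕ):ℤ) by norm_num, zpow_neg, zpow_natCast]
  have hA : (q:ℂ) ^ (2*(m:ℤ)-2) = ((q:ℂ)^2)^m * ((q:ℂ)^2)⁻¹ := by
    rw [show 2*(m:ℤ)-2 = ((2*m:ℕ):ℤ) - ((2:ℕ):ℤ) by push_cast; ring,
      zpow_sub₀ hQ0, zpow_natCast, zpow_natCast, pow_mul, div_eq_mul_inv]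
  have hB : (q:ℂ) ^ (2*(m:ℤ)) = ((q:ℂ)^2)^m := by
    rw [show 2*(m:ℤ) = ((2*m:ℕ):ℤ) by push_cast; ring, zpow_natCast, pow_mul]
  have hε' : ε = -((((q:ℂ)^2)^m)⁻¹) := by
    rw [hε, show -(2*(m:ℤ)) = -((2*m:ℕ):ℤ) by push_cast; ring, zpow_neg,
      zpow_natCast, pow_mul]
  have hr2 : ((q ^ (-2*γ) : ℝ):ℂ) = ((q ^ (-2*γ-1) : ℝ):ℂ) * (q:ℂ) := by
    rw [show -2*γ = (-2*γ-1) + 1 by ring, Real.rpow_add hq0, Real.rpow_one]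
    push_cast; ring
  have hc2 : ((c:ℝ):ℂ)^2 = ((q ^ (-2*γ-1) : ℝ):ℂ) * ((q - q⁻¹:ℝ):ℂ)^2 := by
    have hreal : c^2 = q ^ (-2*γ-1) * (q - q⁻¹)^2 := by
      rw [hc_def, mul_pow, ← Real.rpow_natCast (q ^ (-γ - 1/2)) 2,
        ← Real.rpow_mul hq0.le, show ((-γ - 1/2) * ((2:ℕ):ℝ)) = -2*γ-1 by push_cast; ring]
    rw [← Complex.ofReal_pow, hreal]
    push_cast; ring
  -- vanishing of numerator for large index
  have hvan : ∀ j, m + 1 ≤ j →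
      qPoch (((q:ℂ)^2)^m * ((q:ℂ)^2)⁻¹) (((q:ℂ)^4)⁻¹) j *
        qPoch (((q:ℂ)^2)^m) (((q:ℂ)^4)⁻¹) j = 0 := by
    intro j hj
    rcases Nat.even_or_odd m with ⟨r, hr⟩ | ⟨r, hr⟩
    · refine mul_eq_zero.2 (Or.inr ?_)
      refine Finset.prod_eq_zero (i := r) (Finset.mem_range.2 (by omega)) ?_
      rw [hr, inv_pow, ← pow_mul, ← pow_mul, show 2*(r+r) = 4*r by ring,
        mul_inv_cancel₀ (pow_ne_zero _ hQ0), sub_self]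
    · refine mul_eq_zero.2 (Or.inl ?_)
      refine Finset.prod_eq_zero (i := r) (Finset.mem_range.2 (by omega)) ?_
      rw [hr, inv_pow, ← pow_mul, ← pow_mul, show 2*(2*r+1) = 4*r + 2 by ring]
      have : (q:ℂ) ^ (4*r + 2) * ((q:ℂ)^2)⁻¹ * ((q:ℂ)^(4*r))⁻¹ = 1 := by
        rw [pow_add]
        field_simp
      rw [this, sub_self]
  -- nonvanishing of the denominator factors
  have hfac : ∀ i : ℕ, (1:ℂ) - ((q:ℂ)^4)⁻¹ * (((q:ℂ)^4)⁻¹)^i ≠ 0 := by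
    intro i
    have hlt : ((q:ℝ)^4)⁻¹ ^ (i+1) < 1 := by
      apply pow_lt_one₀ (by positivity)
      · exact inv_lt_one_of_one_lt₀ (one_lt_pow₀ hq (by norm_num))
      · omega
    have hcast : (1:ℂ) - ((q:ℂ)^4)⁻¹ * (((q:ℂ)^4)⁻¹)^i
        = ((1 - ((q:ℝ)^4)⁻¹ ^ (i+1) : ℝ) : ℂ) := by
      push_cast [pow_succ]; ring
    rw [hcast]
    exact_mod_cast ne_of_gt (by linarith)
  have hD : ∀ n, qPoch (((q:ℂ)^4)⁻¹) (((q:ℂ)^4)⁻¹) n ≠ 0 := fun n =>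
    Finset.prod_ne_zero_iff.2 fun i _ => hfac i
  -- coefficients
  set C : ℕ → ℂ := fun j =>
    qPoch (((q:ℂ)^2)^m * ((q:ℂ)^2)⁻¹) (((q:ℂ)^4)⁻¹) j * qPoch (((q:ℂ)^2)^m) (((q:ℂ)^4)⁻¹) j
      / qPoch (((q:ℂ)^4)⁻¹) (((q:ℂ)^4)⁻¹) j with hC_def
  set S : ℕ → ℂ := fun j => Zc^m * (-((q:ℂ)^4)⁻¹ / Zc^2)^j with hS_def
  -- g as a finite sum
  have hgsum : ∀ y : ℝ, g y = ∑ j ∈ range (m+1),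
      C j * ((((c:ℝ):ℂ))*(y:ℂ))^m * (-((q:ℂ)^4)⁻¹ / ((((c:ℝ):ℂ))*(y:ℂ))^2)^j := by
    intro y
    rw [hg y]
    simp only [qHermiteII, phi21, hA, hB, hp4]
    rw [tsum_eq_sum (s := Finset.range (m+1)) ?_]
    · rw [Finset.mul_sum]
      refine Finset.sum_congr rfl fun j _ => ?_
      simp only [hC_def]
      ring
    · intro j hj
      have hj' : m + 1 ≤ j := by
        simp only [Finset.mem_range, not_lt] at hj; exact hj
      rw [hvan j hj', zero_div, zero_mul]
  have hgx : g x = ∑ j ∈ range (m+1), C j * S j := by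
    rw [hgsum x]
    refine Finset.sum_congr rfl fun j _ => ?_
    simp only [hS_def, hZc_def]
    ring
  have hbase2 : -((q:ℂ)^4)⁻¹ / (((q:ℂ)^2) * Zc)^2 = ((q:ℂ)^4)⁻¹ * (-((q:ℂ)^4)⁻¹ / Zc^2) := by
    field_simp
  have hbase3 : -((q:ℂ)^4)⁻¹ / ((((q:ℂ)⁻¹)^2) * Zc)^2 = ((q:ℂ)^4) * (-((q:ℂ)^4)⁻¹ / Zc^2) := by
    field_simp
  have hgx2 : g (q^2*x) = ∑ j ∈ range (m+1),
      C j * (((q:ℂ)^2)^m * (((q:ℂ)^4)⁻¹)^j) * S j := by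
    rw [hgsum (q^2*x)]
    refine Finset.sum_congr rfl fun j _ => ?_
    have hcast : ((q^2*x : ℝ):ℂ) = (q:ℂ)^2 * (x:ℂ) := by push_cast; ring
    rw [hcast, show ((c:ℝ):ℂ) * ((q:ℂ)^2 * (x:ℂ)) = ((q:ℂ)^2) * Zc by rw [hZc_def]; ring,
      mul_pow ((q:ℂ)^2) Zc m, hbase2, mul_pow]
    simp only [hS_def]
    ring
  have hgx3 : g (q⁻¹^2*x) = ∑ j ∈ range (m+1),
      C j * ((((q:ℂ)⁻¹)^2)^m * (((q:ℂ)^4))^j) * S j := by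
    rw [hgsum (q⁻¹^2*x)]
    refine Finset.sum_congr rfl fun j _ => ?_
    have hcast : ((q⁻¹^2*x : ℝ):ℂ) = ((q:ℂ)⁻¹)^2 * (x:ℂ) := by push_cast; ring
    rw [hcast, show ((c:ℝ):ℂ) * (((q:ℂ)⁻¹)^2 * (x:ℂ)) = (((q:ℂ)⁻¹)^2) * Zc by
        rw [hZc_def]; ring,
      mul_pow (((q:ℂ)⁻¹)^2) Zc m, hbase3, mul_pow]
    simp only [hS_def]
    ring
  -- the telescoping function
  set G : ℕ → ℂ := fun j => C j * S j * (x:ℂ)^2 *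
      (-(((q - q⁻¹:ℝ):ℂ)^2) * ((q ^ (-2*γ):ℝ):ℂ) *
        (ε + ((((q:ℂ)^2)^m)⁻¹) * (((q:ℂ)^4)^j))) with hG_def
  have hG0 : G 0 = 0 := by
    simp only [hG_def]
    rw [hε']
    ring
  have hGtop : G (m+1) = 0 := by
    have hC0 : C (m+1) = 0 := by
      simp only [hC_def]
      rw [hvan (m+1) le_rfl, zero_div]
    simp [hG_def, hC0]
  have hiu : (((q:ℂ)⁻¹)^2)^m = (((q:ℂ)^2)^m)⁻¹ := by
    rw [← inv_pow, ← inv_pow]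
  clear_value C S G
  -- the key per-term identity
  have key : ∀ j : ℕ,
      C j * S j * ((q:ℂ) + (q:ℂ)⁻¹ -
          ε * ((q ^ (-2*γ):ℝ):ℂ) * ((q - q⁻¹:ℝ):ℂ)^2 * (x:ℂ)^2)
      - (q:ℂ)⁻¹ * (C j * (((q:ℂ)^2)^m * (((q:ℂ)^4)⁻¹)^j) * S j)
      - (q:ℂ) * (C j * ((((q:ℂ)⁻¹)^2)^m * (((q:ℂ)^4))^j) * S j) *
          (1 + ((q ^ (-2*γ-1):ℝ):ℂ) * ((q - q⁻¹:ℝ):ℂ)^2 * (x:ℂ)^2)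
      = G j - G (j+1) := by
    intro j
    have hCj1 : C (j+1) = C j * (1 - (((q:ℂ)^2)^m * ((q:ℂ)^2)⁻¹) * (((q:ℂ)^4)⁻¹)^j)
        * (1 - (((q:ℂ)^2)^m) * (((q:ℂ)^4)⁻¹)^j) / (1 - ((q:ℂ)^4)⁻¹ * (((q:ℂ)^4)⁻¹)^j) := by
      simp only [hC_def, qPoch_succ]
      have h1 := hD j
      have h2 := hfac j
      field_simp
    have hS1 : S (j+1) = S j * (-((q:ℂ)^4)⁻¹ / Zc^2) := by
      simp only [hS_def]
      ring
    have hZc2 : Zc^2 = ((q ^ (-2*γ-1):ℝ):ℂ) * ((q - q⁻¹:ℝ):ℂ)^2 * (x:ℂ)^2 := by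
      rw [hZc_def, mul_pow, hc2]
    have hV : ((q:ℂ)^4)^j ≠ 0 := pow_ne_zero _ (pow_ne_zero _ hQ0)
    have hU : ((q:ℂ)^2)^m ≠ 0 := pow_ne_zero _ (pow_ne_zero _ hQ0)
    have hden : (1:ℂ) - ((q:ℂ)^4)⁻¹ * (((q:ℂ)^4)^j)⁻¹ ≠ 0 := by
      have := hfac j
      rwa [inv_pow] at this
    simp only [hG_def]
    rw [hCj1, hS1, hZc2, hε', hr2, hiu, inv_pow ((q:ℂ)^4) j, pow_succ ((q:ℂ)^4) j]
    have hsc := scalar_key (q:ℂ) (((q:ℂ)^2)^m) (((q:ℂ)^4)^j)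
      ((q ^ (-2*γ-1):ℝ):ℂ) ((q - q⁻¹:ℝ):ℂ) (x:ℂ) hQ0 hU hV hr21 hL hX hden
    linear_combination (C j * S j) * hsc
  -- assemble
  rw [hgx, hgx2, hgx3]
  rw [Finset.sum_mul, Finset.mul_sum, Finset.mul_sum, Finset.sum_mul,
    ← Finset.sum_sub_distrib, ← Finset.sum_sub_distrib]
  rw [Finset.sum_congr rfl fun j _ => key j, Finset.sum_range_sub' G (m+1), hG0, hGtop,
    sub_zero]
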